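/- Let u_1, u_2 be nonzero vectors in R^d and suppose there exists a signed permutation π in B_d such that u_1 and π(u_2) induce the same partition of the vertices of the cube C_d, where a vector u partitions the vertices into those v with <u,v> ≥ 0 and those with <u,v> < 0. Then the slices C_d ∩ u_1^⊥ and C_d ∩ u_2^⊥ are combinatorially equivalent. -/

import Mathlib

open scoped RealInnerProductSpace

noncomputable section

/-- The `d`-dimensional cube `C_d = [-1,1]^d`. -/
def cube (d : ℕ) : Set (EuclideanSpace ℝ (Fin d)) := {x | ∀ i, |x i| ≤ 1}

/-- The vertex set `{-1,1}^d` of the cube `C_d`. -/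
def cubeVertices (d : ℕ) : Set (EuclideanSpace ℝ (Fin d)) := {x | ∀ i, x i = 1 ∨ x i = -1}

/-- The (affine) dimension of a subset of Euclidean space: the dimension of the direction of
its affine span. -/
def adim {d : ℕ} (S : Set (EuclideanSpace ℝ (Fin d))) : ℕ :=
  Module.finrank ℝ (affineSpan ℝ S).direction

/-- Two sets (e.g. polytopes) are combinatorially equivalent if their posets of exposed faces
(i.e., their face lattices), ordered by inclusion, are order-isomorphic. -/
def CombEquiv {d e : ℕ} (P : Set (EuclideanSpace ℝ (Fin d)))
    (Q : Set (EuclideanSpace ℝ (Fin e))) : Prop :=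
  Nonempty ({F : Set (EuclideanSpace ℝ (Fin d)) // IsExposed ℝ P F} ≃o
            {G : Set (EuclideanSpace ℝ (Fin e)) // IsExposed ℝ Q G})

/-- A signed permutation of `[d]`: a permutation of the coordinates together with a sign
change `±1` in each coordinate. The group of these is `B_d`, the symmetry group of the cube. -/
structure SignedPerm (d : ℕ) where
  perm : Equiv.Perm (Fin d)
  sign : Fin d → ℝ
  sign_unit : ∀ i, sign i = 1 ∨ sign i = -1

/-- The action of a signed permutation on a vector of `ℝ^d`. -/
def SignedPerm.act {d : ℕ} (π : SignedPerm d) (v : EuclideanSpace ℝ (Fin d)) :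
    EuclideanSpace ℝ (Fin d) :=
  WithLp.toLp 2 (fun i => π.sign i * v (π.perm i))

namespace CubeSliceAux

variable {d : ℕ}

abbrev E (d : ℕ) := EuclideanSpace ℝ (Fin d)

lemma inner_eq (u x : E d) : ⟪u, x⟫ = ∑ i, u i * x i := by
  simp [PiLp.inner_apply, RCLike.inner_apply, mul_comm]

/-- sign vectors -/
def IsSgn (σ : Fin d → ℝ) : Prop := ∀ i, σ i = 1 ∨ σ i = -1 ∨ σ i = 0

/-- vertices of the cube face determined by σ -/
def VtxOf (σ : Fin d → ℝ) (v : E d) : Prop :=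
  (∀ i, σ i ≠ 0 → v i = σ i) ∧ ∀ i, v i = 1 ∨ v i = -1

/-- the hyperplane u^⊥ meets the relative interior of the cube face of σ -/
def relCond (u : E d) (σ : Fin d → ℝ) : Prop :=
  ∃ x : E d, (∀ i, σ i ≠ 0 → x i = σ i) ∧ (∀ i, σ i = 0 → |x i| < 1) ∧ ⟪u, x⟫ = 0

/-- the combinatorial condition on vertex signs equivalent to `relCond` -/
def vtxCond (u : E d) (σ : Fin d → ℝ) : Prop :=
  ((∃ v : E d, VtxOf σ v ∧ 0 < ⟪u, v⟫) ∧ (∃ v : E d, VtxOf σ v ∧ ⟪u, v⟫ < 0))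
  ∨ (∀ v : E d, VtxOf σ v → ⟪u, v⟫ = 0)

/-- `s i` is a choice of sign for `u i`, with `u i * s i = |u i|`. -/
private def sg (u : E d) : Fin d → ℝ := fun i => if 0 ≤ u i then 1 else -1

lemma sg_unit (u : E d) (i : Fin d) : sg u i = 1 ∨ sg u i = -1 := by
  unfold sg; split_ifs <;> simp

lemma mul_sg (u : E d) (i : Fin d) : u i * sg u i = |u i| := by
  unfold sg
  split_ifs with h
  · rw [mul_one, abs_of_nonneg h]
  · push_neg at h
    rw [abs_of_neg h]; ring

lemma abs_sg (u : E d) (i : Fin d) : |sg u i| = 1 := by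
  rcases sg_unit u i with h | h <;> rw [h] <;> norm_num

lemma relCond_iff_vtxCond (u : E d) (σ : Fin d → ℝ) (hσ : IsSgn σ) :
    relCond u σ ↔ vtxCond u σ := by
  constructor
  · rintro ⟨x, h1, h2, h3⟩
    rw [inner_eq] at h3
    by_cases hA : ∀ i, σ i = 0 → u i = 0
    · right
      intro v hv
      rw [inner_eq]
      rw [← h3]
      refine Finset.sum_congr rfl fun i _ => ?_
      by_cases hi : σ i = 0
      · rw [hA i hi]; ring
      · rw [hv.1 i hi, h1 i hi]
    · left
      push_neg at hA
      obtain ⟨i₀, hi₀, hu₀⟩ := hA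
      have hx₀ : |x i₀| < 1 := h2 i₀ hi₀
      constructor
      · refine ⟨WithLp.toLp 2 (fun i => if σ i = 0 then sg u i else σ i), ⟨fun i hi => by simp [hi],
          fun i => ?_⟩, ?_⟩
        · by_cases hi : σ i = 0
          · simp only [hi, if_pos]; simpa using sg_unit u i
          · simp only [hi, if_neg]
            rcases hσ i with h | h | h
            · left; simpa [hi] using h
            · right; simpa [hi] using h
            · exact absurd h hi
        · rw [inner_eq]
          have : ∑ i, u i * (if σ i = 0 then sg u i else σ i)
              = ∑ i, (u i * (if σ i = 0 then sg u i else σ i) - u i * x i) := by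
            rw [Finset.sum_sub_distrib, h3, sub_zero]
          rw [this]
          refine Finset.sum_pos' (fun i _ => ?_) ⟨i₀, Finset.mem_univ _, ?_⟩
          · by_cases hi : σ i = 0
            · simp only [hi, if_pos, mul_sg]
              have : u i * x i ≤ |u i| := by
                calc u i * x i ≤ |u i * x i| := le_abs_self _
                  _ = |u i| * |x i| := abs_mul _ _
                  _ ≤ |u i| * 1 := mul_le_mul_of_nonneg_left (h2 i hi).le (abs_nonneg _)
                  _ = |u i| := mul_one _
              linarith
            · simp only [hi, if_neg, h1 i hi]
              simp
          · simp only [hi₀, if_pos, mul_sg]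
            have : u i₀ * x i₀ < |u i₀| := by
              calc u i₀ * x i₀ ≤ |u i₀ * x i₀| := le_abs_self _
                _ = |u i₀| * |x i₀| := abs_mul _ _
                _ < |u i₀| * 1 := by
                    exact mul_lt_mul_of_pos_left hx₀ (abs_pos.mpr hu₀)
                _ = |u i₀| := mul_one _
            linarith
      · refine ⟨WithLp.toLp 2 (fun i => if σ i = 0 then -sg u i else σ i), ⟨fun i hi => by simp [hi],
          fun i => ?_⟩, ?_⟩
        · by_cases hi : σ i = 0
          · simp only [hi, if_pos]
            rcases sg_unit u i with h | h <;> rw [h] <;> simp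
          · simp only [hi, if_neg]
            rcases hσ i with h | h | h
            · left; simpa [hi] using h
            · right; simpa [hi] using h
            · exact absurd h hi
        · rw [inner_eq]
          have : ∑ i, u i * (if σ i = 0 then -sg u i else σ i)
              = ∑ i, (u i * (if σ i = 0 then -sg u i else σ i) - u i * x i) := by
            rw [Finset.sum_sub_distrib, h3, sub_zero]
          rw [this]
          have hneg : ∑ i, (u i * (if σ i = 0 then -sg u i else σ i) - u i * x i)
              < ∑ _i : Fin d, (0:ℝ) := by
            refine Finset.sum_lt_sum (fun i _ => ?_) ⟨i₀, Finset.mem_univ _, ?_⟩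
            · by_cases hi : σ i = 0
              · simp only [hi, if_pos]
                have h4 : u i * -sg u i = -|u i| := by rw [mul_neg, mul_sg]
                rw [h4]
                have : -(u i * x i) ≤ |u i| := by
                  calc -(u i * x i) ≤ |u i * x i| := neg_le_abs _
                    _ = |u i| * |x i| := abs_mul _ _
                    _ ≤ |u i| * 1 := mul_le_mul_of_nonneg_left (h2 i hi).le (abs_nonneg _)
                    _ = |u i| := mul_one _
                linarith
              · simp only [hi, if_neg, h1 i hi]
                simp
            · simp only [hi₀, if_pos]
              have h4 : u i₀ * -sg u i₀ = -|u i₀| := by rw [mul_neg, mul_sg]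
              rw [h4]
              have : -(u i₀ * x i₀) < |u i₀| := by
                calc -(u i₀ * x i₀) ≤ |u i₀ * x i₀| := neg_le_abs _
                  _ = |u i₀| * |x i₀| := abs_mul _ _
                  _ < |u i₀| * 1 := mul_lt_mul_of_pos_left hx₀ (abs_pos.mpr hu₀)
                  _ = |u i₀| := mul_one _
              linarith
          simpa using hneg
  · rintro (⟨⟨v, hv, hvpos⟩, ⟨w, hw, hwneg⟩⟩ | hall)
    · set a : ℝ := ∑ i, if σ i = 0 then 0 else u i * σ i with ha
      set b : ℝ := ∑ i, if σ i = 0 then |u i| else 0 with hb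
      have hvab : ⟪u, v⟫ ≤ a + b := by
        rw [inner_eq, ha, hb, ← Finset.sum_add_distrib]
        refine Finset.sum_le_sum fun i _ => ?_
        by_cases hi : σ i = 0
        · simp only [hi, if_pos, zero_add]
          calc u i * v i ≤ |u i * v i| := le_abs_self _
            _ = |u i| * |v i| := abs_mul _ _
            _ = |u i| := by
                rcases hv.2 i with h | h <;> rw [h] <;> norm_num
        · simp [hi, hv.1 i hi]
      have hwab : a - b ≤ ⟪u, w⟫ := by
        rw [inner_eq, ha, hb, ← Finset.sum_sub_distrib]
        refine Finset.sum_le_sum fun i _ => ?_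
        by_cases hi : σ i = 0
        · simp only [hi, if_pos, zero_sub]
          calc -|u i| = -(|u i| * |w i|) := by
                rcases hw.2 i with h | h <;> rw [h] <;> norm_num
            _ = -|u i * w i| := by rw [abs_mul]
            _ ≤ u i * w i := neg_abs_le _
        · simp [hi, hw.1 i hi]
      have hab1 : 0 < a + b := lt_of_lt_of_le hvpos hvab
      have hab2 : a - b < 0 := lt_of_le_of_lt hwab hwneg
      have hbpos : 0 < b := by linarith
      set c : ℝ := -a / b with hc
      have hcabs : |c| < 1 := by
        rw [hc, abs_div, abs_neg, div_lt_one (by rwa [abs_of_pos hbpos])]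
        rw [abs_of_pos hbpos]
        rw [abs_lt]
        constructor <;> linarith
      refine ⟨WithLp.toLp 2 (fun i => if σ i = 0 then c * sg u i else σ i), fun i hi => by simp [hi],
        fun i hi => ?_, ?_⟩
      · simp only [hi, if_pos]
        rw [abs_mul, abs_sg, mul_one]
        exact hcabs
      · rw [inner_eq]
        have hsplit : ∑ i, u i * (if σ i = 0 then c * sg u i else σ i)
            = (∑ i, if σ i = 0 then (0:ℝ) else u i * σ i)
              + ∑ i, (if σ i = 0 then c * |u i| else 0) := by
          rw [← Finset.sum_add_distrib]
          refine Finset.sum_congr rfl fun i _ => ?_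
          by_cases hi : σ i = 0
          · simp only [hi, if_pos, zero_add]
            rw [show u i * (c * sg u i) = c * (u i * sg u i) by ring, mul_sg]
          · simp [hi]
        rw [hsplit]
        have : ∑ i, (if σ i = 0 then c * |u i| else (0:ℝ)) = c * b := by
          rw [hb, Finset.mul_sum]
          refine Finset.sum_congr rfl fun i _ => ?_
          split_ifs <;> ring
        rw [this, ← ha, hc]
        field_simp
        ring
    · -- all vertices orthogonal to u
      have hu0 : ∀ i, σ i = 0 → u i = 0 := by
        intro i₀ hi₀
        set v1 : E d := WithLp.toLp 2 (fun i => if σ i = 0 then 1 else σ i) with hv1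
        have hv1vtx : VtxOf σ v1 := by
          refine ⟨fun i hi => by simp [hv1, hi], fun i => ?_⟩
          by_cases hi : σ i = 0
          · left; simp [hv1, hi]
          · simp only [hv1, hi, if_neg]
            rcases hσ i with h | h | h
            · left; simpa [hi] using h
            · right; simpa [hi] using h
            · exact absurd h hi
        set v2 : E d := WithLp.toLp 2 (Function.update v1.ofLp i₀ (-1)) with hv2
        have hv2vtx : VtxOf σ v2 := by
          constructor
          · intro i hi
            have hne : i ≠ i₀ := fun he => hi (he ▸ hi₀)
            rw [hv2, WithLp.ofLp_toLp, Function.update_of_ne hne]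
            exact hv1vtx.1 i hi
          · intro i
            by_cases hie : i = i₀
            · right; rw [hv2, hie, WithLp.ofLp_toLp, Function.update_self]
            · rw [hv2, WithLp.ofLp_toLp, Function.update_of_ne hie]
              exact hv1vtx.2 i
        have h1 := hall v1 hv1vtx
        have h2 := hall v2 hv2vtx
        rw [inner_eq] at h1 h2
        have hdiff : ∑ i, (u i * v1 i - u i * v2 i) = 0 := by
          rw [Finset.sum_sub_distrib, h1, h2, sub_zero]
        have hsingle : ∑ i, (u i * v1 i - u i * v2 i) = 2 * u i₀ := by
          rw [Finset.sum_eq_single i₀]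
          · rw [hv2, WithLp.ofLp_toLp (p := 2) (Function.update v1.ofLp i₀ (-1)), Function.update_self, hv1]
            simp only [hi₀, if_pos, WithLp.ofLp_toLp]
            ring
          · intro i _ hne
            rw [hv2, WithLp.ofLp_toLp (p := 2) (Function.update v1.ofLp i₀ (-1)), Function.update_of_ne hne]
            ring
          · intro habs; exact absurd (Finset.mem_univ i₀) habs
        rw [hsingle] at hdiff
        linarith
      refine ⟨WithLp.toLp 2 (fun i => if σ i = 0 then 0 else σ i), fun i hi => by simp [hi],
        fun i hi => by simp [hi], ?_⟩
      rw [inner_eq]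
      set v1 : E d := WithLp.toLp 2 (fun i => if σ i = 0 then 1 else σ i) with hv1
      have hv1vtx : VtxOf σ v1 := by
        refine ⟨fun i hi => by simp [hv1, hi], fun i => ?_⟩
        by_cases hi : σ i = 0
        · left; simp [hv1, hi]
        · simp only [hv1, hi, if_neg]
          rcases hσ i with h | h | h
          · left; simpa [hi] using h
          · right; simpa [hi] using h
          · exact absurd h hi
      have h1 := hall v1 hv1vtx
      rw [inner_eq] at h1
      refine Eq.trans ?_ h1
      refine Finset.sum_congr rfl fun i _ => ?_
      by_cases hi : σ i = 0
      · simp [hv1, hi, hu0 i hi]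
      · simp [hv1, hi]

/-- the slice -/
def slice (u : E d) : Set (E d) := cube d ∩ {x | ⟪u, x⟫ = 0}

/-- candidate face of the slice -/
def fface (u : E d) (σ : Fin d → ℝ) : Set (E d) :=
  {x ∈ slice u | ∀ i, σ i ≠ 0 → x i = σ i}

lemma abs_sgn_le_one {σ : Fin d → ℝ} (hσ : IsSgn σ) (i : Fin d) : |σ i| ≤ 1 := by
  rcases hσ i with h | h | h <;> rw [h] <;> norm_num

lemma fface_exposed (u : E d) (σ : Fin d → ℝ) (hσ : IsSgn σ) :
    IsExposed ℝ (slice u) (fface u σ) := by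
  intro hne
  obtain ⟨x₀, hx₀⟩ := hne
  have hσ' : IsSgn σ := hσ
  refine ⟨innerSL ℝ (show E d from WithLp.toLp 2 σ), ?_⟩
  have hip : ∀ x : E d, (innerSL ℝ (show E d from WithLp.toLp 2 σ)) x = ∑ i, σ i * x i := by
    intro x; simp only [innerSL_apply_apply]; exact inner_eq _ x
  have habs : ∀ (x : E d), (∀ i, |x i| ≤ 1) → ∀ j, σ j * x j ≤ |σ j| := by
    intro x hx j
    calc σ j * x j ≤ |σ j * x j| := le_abs_self _
      _ = |σ j| * |x j| := abs_mul _ _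
      _ ≤ |σ j| * 1 := mul_le_mul_of_nonneg_left (hx j) (abs_nonneg _)
      _ = |σ j| := mul_one _
  have hval : ∀ x ∈ fface u σ, ∑ i, σ i * x i = ∑ i, |σ i| := by
    intro x hx
    refine Finset.sum_congr rfl fun i _ => ?_
    by_cases hi : σ i = 0
    · rw [hi]; simp
    · rw [hx.2 i hi]
      rcases hσ i with h | h | h <;> rw [h] <;> norm_num
  have hbound : ∀ y ∈ slice u, ∑ i, σ i * y i ≤ ∑ i, |σ i| :=
    fun y hy => Finset.sum_le_sum fun i _ => habs y hy.1 i
  ext x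
  constructor
  · intro hx
    refine ⟨hx.1, fun y hy => ?_⟩
    rw [hip, hip, hval x hx]
    exact hbound y hy
  · rintro ⟨hxP, hmax⟩
    have hxk : ∑ i, σ i * x i = ∑ i, |σ i| := by
      have h1 : ∑ i, σ i * x i ≤ ∑ i, |σ i| := hbound x hxP
      have h2 : (∑ i, |σ i|) ≤ ∑ i, σ i * x i := by
        rw [← hval x₀ hx₀]
        have := hmax x₀ hx₀.1
        rw [hip, hip] at this
        exact this
      linarith
    refine ⟨hxP, fun i hi => ?_⟩
    have hzero : ∑ j, (|σ j| - σ j * x j) = 0 := by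
      rw [Finset.sum_sub_distrib, hxk]; ring
    have hterm : ∀ j ∈ Finset.univ, (0:ℝ) ≤ |σ j| - σ j * x j := by
      intro j _
      have := habs x hxP.1 j
      linarith
    have heach := (Finset.sum_eq_zero_iff_of_nonneg hterm).mp hzero i (Finset.mem_univ i)
    have hxi : σ i * x i = |σ i| := by linarith
    rcases hσ' i with h | h | h
    · rw [h] at hxi ⊢; rw [abs_one] at hxi; linarith
    · rw [h] at hxi ⊢; rw [abs_neg, abs_one] at hxi; linarith
    · exact absurd h hi

lemma relCond_mem_fface {u : E d} {σ : Fin d → ℝ} (hσ : IsSgn σ)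
    {x : E d} (h1 : ∀ i, σ i ≠ 0 → x i = σ i) (h2 : ∀ i, σ i = 0 → |x i| < 1)
    (h3 : ⟪u, x⟫ = 0) : x ∈ fface u σ := by
  refine ⟨⟨fun i => ?_, h3⟩, h1⟩
  by_cases hi : σ i = 0
  · exact (h2 i hi).le
  · rw [h1 i hi]; exact abs_sgn_le_one hσ i

lemma fface_subset_iff (u : E d) (σ τ : Fin d → ℝ) (hσ : IsSgn σ) (hτ : IsSgn τ)
    (hrσ : relCond u σ) :
    fface u σ ⊆ fface u τ ↔ ∀ i, τ i ≠ 0 → σ i = τ i := by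
  constructor
  · intro hsub i hτi
    obtain ⟨x, h1, h2, h3⟩ := hrσ
    have hxσ : x ∈ fface u σ := relCond_mem_fface hσ h1 h2 h3
    have hxτ := hsub hxσ
    have hxi : x i = τ i := hxτ.2 i hτi
    by_cases hσi : σ i = 0
    · have := h2 i hσi
      rw [hxi] at this
      rcases hτ i with h | h | h <;> rw [h] at this <;> norm_num at this
      exact absurd h hτi
    · rw [← h1 i hσi, hxi]
  · intro hle x hx
    exact ⟨hx.1, fun i hτi => by rw [hx.2 i (by rw [hle i hτi]; exact hτi), hle i hτi]⟩

lemma slice_convex (u : E d) : Convex ℝ (slice u) := by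
  apply Convex.inter
  · intro x hx y hy a b ha hb hab
    intro i
    have : (a • x + b • y) i = a * x i + b * y i := by simp
    rw [this]
    calc |a * x i + b * y i| ≤ |a * x i| + |b * y i| := abs_add_le _ _
      _ = a * |x i| + b * |y i| := by
          rw [abs_mul, abs_mul, abs_of_nonneg ha, abs_of_nonneg hb]
      _ ≤ a * 1 + b * 1 := by
          refine add_le_add ?_ ?_
          · exact mul_le_mul_of_nonneg_left (hx i) ha
          · exact mul_le_mul_of_nonneg_left (hy i) hb
      _ = 1 := by rw [mul_one, mul_one, hab]
  · intro x hx y hy a b _ _ _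
    simp only [Set.mem_setOf_eq] at hx hy ⊢
    rw [inner_add_right, inner_smul_right, inner_smul_right, hx, hy]
    ring

lemma exposed_eq_fface (hd : 0 < d) (u : E d) (F : Set (E d))
    (hF : IsExposed ℝ (slice u) F) (hne : F.Nonempty) :
    ∃ σ : Fin d → ℝ, IsSgn σ ∧ relCond u σ ∧ F = fface u σ := by
  classical
  obtain ⟨l, hl⟩ := hF hne
  have hFsub : F ⊆ slice u := by rw [hl]; exact fun x hx => hx.1
  have hFconv : Convex ℝ F := hF.convex (slice_convex u)
  set σ : Fin d → ℝ := fun i =>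
    if ∀ x ∈ F, x i = 1 then 1 else if ∀ x ∈ F, x i = -1 then -1 else 0 with hσdef
  have hσ : IsSgn σ := by
    intro i
    rw [hσdef]; dsimp only; split_ifs <;> simp
  have hfix : ∀ i, σ i ≠ 0 → ∀ x ∈ F, x i = σ i := by
    intro i hi x hx
    rw [hσdef] at hi ⊢
    dsimp only at hi ⊢
    split_ifs at hi ⊢ with h1 h2
    · exact h1 x hx
    · exact h2 x hx
    · exact absurd rfl hi
  have hfree : ∀ i, σ i = 0 → (∃ p ∈ F, p i < 1) ∧ (∃ q ∈ F, -1 < q i) := by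
    intro i hi
    rw [hσdef] at hi
    dsimp only at hi
    split_ifs at hi with h1 h2
    · norm_num at hi
    · norm_num at hi
    constructor
    · push_neg at h1
      obtain ⟨p, hpF, hpi⟩ := h1
      exact ⟨p, hpF, lt_of_le_of_ne (le_of_abs_le ((hFsub hpF).1 i)) hpi⟩
    · push_neg at h2
      obtain ⟨q, hqF, hqi⟩ := h2
      refine ⟨q, hqF, ?_⟩
      have := (abs_le.mp ((hFsub hqF).1 i)).1
      exact lt_of_le_of_ne this (fun he => hqi he.symm)
  -- for each coordinate, a point of F with strict bound at that coordinate
  have hmid : ∀ i : Fin d, ∃ m ∈ F, (σ i = 0 → |m i| < 1) := by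
    intro i
    by_cases hi : σ i = 0
    · obtain ⟨⟨p, hpF, hpi⟩, ⟨q, hqF, hqi⟩⟩ := hfree i hi
      refine ⟨(1/2 : ℝ) • p + (1/2 : ℝ) • q, ?_, fun _ => ?_⟩
      · exact hFconv hpF hqF (by norm_num) (by norm_num) (by norm_num)
      · have hco : ((1/2 : ℝ) • p + (1/2 : ℝ) • q) i = (1/2) * p i + (1/2) * q i := by
          simp
        rw [hco]
        have hp2 := abs_le.mp ((hFsub hpF).1 i)
        have hq2 := abs_le.mp ((hFsub hqF).1 i)
        rw [abs_lt]
        constructor <;> [nlinarith; nlinarith]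
    · obtain ⟨x₀, hx₀⟩ := hne
      exact ⟨x₀, hx₀, fun h => absurd h hi⟩
  choose m hmF hmlt using hmid
  set xb : E d := WithLp.toLp 2 (fun j => (d : ℝ)⁻¹ * ∑ i, m i j) with hxb
  have hdpos : (0 : ℝ) < d := by exact_mod_cast hd
  have hxbF : xb ∈ F := by
    have heq : xb = ∑ i : Fin d, (d : ℝ)⁻¹ • m i := by
      ext j
      have h1 : (∑ i : Fin d, (d : ℝ)⁻¹ • m i) j = ∑ i : Fin d, (d:ℝ)⁻¹ * m i j := by
        rw [WithLp.ofLp_sum, Finset.sum_apply]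
        refine Finset.sum_congr rfl fun i _ => ?_
        simp
      rw [h1, ← Finset.mul_sum]
    rw [heq]
    refine hFconv.sum_mem (fun i _ => by positivity) ?_ (fun i _ => hmF i)
    rw [Finset.sum_const, Finset.card_univ, Fintype.card_fin, nsmul_eq_mul]
    field_simp
  have hxbfix : ∀ j, σ j ≠ 0 → xb j = σ j := by
    intro j hj
    rw [hxb]
    dsimp only
    have : ∑ i : Fin d, m i j = d * σ j := by
      rw [Finset.sum_congr rfl fun i _ => hfix j hj (m i) (hmF i)]
      rw [Finset.sum_const, Finset.card_univ, Fintype.card_fin, nsmul_eq_mul]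
    rw [this]
    field_simp
  have hxbint : ∀ j, σ j = 0 → |xb j| < 1 := by
    intro j hj
    have hub : ∑ i : Fin d, m i j < d := by
      calc ∑ i : Fin d, m i j < ∑ _i : Fin d, (1:ℝ) := by
            refine Finset.sum_lt_sum (fun i _ => (abs_le.mp ((hFsub (hmF i)).1 j)).2)
              ⟨j, Finset.mem_univ _, (abs_lt.mp (hmlt j hj)).2⟩
        _ = d := by rw [Finset.sum_const, Finset.card_univ, Fintype.card_fin, nsmul_eq_mul, mul_one]
    have hlb : (-(d:ℝ)) < ∑ i : Fin d, m i j := by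
      calc (-(d:ℝ)) = ∑ _i : Fin d, (-1:ℝ) := by
            rw [Finset.sum_const, Finset.card_univ, Fintype.card_fin, nsmul_eq_mul]; ring
        _ < ∑ i : Fin d, m i j := by
            refine Finset.sum_lt_sum (fun i _ => (abs_le.mp ((hFsub (hmF i)).1 j)).1)
              ⟨j, Finset.mem_univ _, (abs_lt.mp (hmlt j hj)).1⟩
    rw [hxb]
    dsimp only
    rw [abs_lt]
    constructor
    · rw [show (-1 : ℝ) = (d:ℝ)⁻¹ * (-(d:ℝ)) by field_simp]
      exact mul_lt_mul_of_pos_left hlb (by positivity)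
    · rw [show (1 : ℝ) = (d:ℝ)⁻¹ * (d:ℝ) by field_simp]
      exact mul_lt_mul_of_pos_left hub (by positivity)
  have hxbrel : ⟪u, xb⟫ = 0 := (hFsub hxbF).2
  refine ⟨σ, hσ, ⟨xb, hxbfix, hxbint, hxbrel⟩, ?_⟩
  apply Set.Subset.antisymm
  · intro x hx
    exact ⟨hFsub hx, fun i hi => hfix i hi x hx⟩
  · intro y hy
    -- choose a small positive t
    set g : Fin d → ℝ := fun i =>
      if σ i = 0 then (1 - |xb i|) / (|xb i - y i| + 1) else 1 with hg
    have hgpos : ∀ i, 0 < g i := by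
      intro i
      rw [hg]
      dsimp only
      split_ifs with hi
      · have := hxbint i hi
        apply div_pos
        · linarith
        · positivity
      · norm_num
    obtain ⟨t, ht0, htle⟩ : ∃ t : ℝ, 0 < t ∧ ∀ i, t ≤ g i := by
      set s := insert (1:ℝ) (Finset.univ.image g) with hs
      have hsne : s.Nonempty := ⟨1, Finset.mem_insert_self _ _⟩
      refine ⟨s.min' hsne, ?_, ?_⟩
      · have := s.min'_mem hsne
        rcases Finset.mem_insert.mp this with h | h
        · rw [h]; norm_num
        · obtain ⟨i, _, hi⟩ := Finset.mem_image.mp h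
          rw [← hi]; exact hgpos i
      · intro i
        exact s.min'_le _ (Finset.mem_insert_of_mem
          (Finset.mem_image_of_mem g (Finset.mem_univ i)))
    set z : E d := WithLp.toLp 2 (fun i => xb i + t * (xb i - y i)) with hz
    have hyS : y ∈ slice u := hy.1
    have hzS : z ∈ slice u := by
      constructor
      · intro i
        rw [hz]
        dsimp only
        by_cases hi : σ i = 0
        · set A := |xb i| with hA
          set D := |xb i - y i| with hD
          have hA1 : A < 1 := hxbint i hi
          have hD0 : 0 ≤ D := abs_nonneg _
          have htg : t ≤ (1 - A) / (D + 1) := by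
            have := htle i
            rw [hg] at this
            dsimp only at this
            rw [if_pos hi] at this
            exact this
          have h1 : t * D ≤ (1 - A) / (D + 1) * D :=
            mul_le_mul_of_nonneg_right htg hD0
          have h2 : (1 - A) / (D + 1) * D ≤ 1 - A := by
            rw [div_mul_eq_mul_div, div_le_iff₀ (by linarith)]
            nlinarith
          calc |xb i + t * (xb i - y i)| ≤ |xb i| + |t * (xb i - y i)| := abs_add_le _ _
            _ = A + t * D := by
                have habs : |t * (xb i - y i)| = t * D := by
                  rw [abs_mul, abs_of_pos ht0, hD]
                rw [habs, hA]
            _ ≤ A + (1 - A) := by linarith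
            _ = 1 := by ring
        · have hxi := hxbfix i hi
          have hyi := hy.2 i hi
          rw [hxi, hyi, sub_self, mul_zero, add_zero]
          exact abs_sgn_le_one hσ i
      · show ⟪u, z⟫ = 0
        rw [inner_eq]
        have hyinner : ∑ i, u i * y i = 0 := by rw [← inner_eq]; exact hyS.2
        have hxinner : ∑ i, u i * xb i = 0 := by rw [← inner_eq]; exact hxbrel
        have : ∑ i, u i * z i
            = ∑ i, u i * xb i + t * (∑ i, u i * xb i - ∑ i, u i * y i) := by
          rw [← Finset.sum_sub_distrib, Finset.mul_sum, ← Finset.sum_add_distrib]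
          refine Finset.sum_congr rfl fun i _ => ?_
          rw [hz]
          dsimp only
          ring
        rw [this, hyinner, hxinner]
        ring
    -- the convexity trick
    have hxbmax : ∀ p ∈ slice u, l p ≤ l xb := by
      have := hxbF
      rw [hl] at this
      exact this.2
    have hid : xb = (1 / (1 + t)) • z + (t / (1 + t)) • y := by
      ext j
      have happ : ((1 / (1 + t)) • z + (t / (1 + t)) • y) j
          = (1 / (1 + t)) * z j + (t / (1 + t)) * y j := by simp
      rw [happ, hz]
      dsimp only
      field_simp
      ring
    have hlcalc : l xb = (1 / (1 + t)) * l z + (t / (1 + t)) * l y := by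
      rw [hid]
      rw [map_add, map_smul, map_smul]
      simp
    have hlz : l z ≤ l xb := hxbmax z hzS
    have hly : l y ≤ l xb := hxbmax y hyS
    have hlyge : l xb ≤ l y := by
      have h1t : (0:ℝ) < 1 + t := by linarith
      have hfs : (1 + t) * l xb = l z + t * l y := by
        rw [hlcalc]
        field_simp
      have h2 : t * l xb ≤ t * l y := by linarith
      exact le_of_mul_le_mul_left h2 ht0
    rw [hl]
    exact ⟨hyS, fun p hp => le_trans (hxbmax p hp) hlyge⟩

/-- index poset -/
structure CF (u : E d) : Type where
  σ : Fin d → ℝ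
  isSgn : IsSgn σ
  rel : relCond u σ

lemma CF.ext' {u : E d} {a b : CF u} (h : a.σ = b.σ) : a = b := by
  cases a; cases b; simp_all

instance (u : E d) : PartialOrder (CF u) where
  le a b := ∀ i, b.σ i ≠ 0 → a.σ i = b.σ i
  le_refl a := fun i _ => rfl
  le_trans a b c hab hbc := fun i hc => by
    have hb : b.σ i = c.σ i := hbc i hc
    rw [hab i (by rw [hb]; exact hc), hb]
  le_antisymm a b hab hba := by
    apply CF.ext'
    funext i
    by_cases hb : b.σ i = 0
    · by_cases ha : a.σ i = 0
      · rw [ha, hb]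
      · rw [hba i ha] at hb; rw [hb] at ha; exact absurd rfl ha
    · exact hab i hb

def faceMap (u : E d) : WithBot (CF u) → {F : Set (E d) // IsExposed ℝ (slice u) F} :=
  fun a => a.recBotCoe ⟨∅, fun h => absurd h (by simp)⟩
    (fun c => ⟨fface u c.σ, fface_exposed u c.σ c.isSgn⟩)

lemma fface_nonempty {u : E d} (c : CF u) : (fface u c.σ).Nonempty := by
  obtain ⟨x, h1, h2, h3⟩ := c.rel
  exact ⟨x, relCond_mem_fface c.isSgn h1 h2 h3⟩

lemma faceMap_le_iff (u : E d) (a b : WithBot (CF u)) :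
    faceMap u a ≤ faceMap u b ↔ a ≤ b := by
  induction a using WithBot.recBotCoe with
  | bot =>
    simp only [faceMap, WithBot.recBotCoe_bot]
    constructor
    · intro _; exact bot_le
    · intro _
      show (∅ : Set (E d)) ⊆ _
      exact Set.empty_subset _
  | coe c =>
    induction b using WithBot.recBotCoe with
    | bot =>
      simp only [faceMap, WithBot.recBotCoe_coe, WithBot.recBotCoe_bot]
      constructor
      · intro hsub
        obtain ⟨x, hx⟩ := fface_nonempty c
        have : x ∈ (∅ : Set (E d)) := hsub hx
        simp at this
      · intro hle
        exact absurd hle (by simp)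
    | coe c' =>
      simp only [faceMap, WithBot.recBotCoe_coe]
      rw [WithBot.coe_le_coe]
      show fface u c.σ ⊆ fface u c'.σ ↔ _
      rw [fface_subset_iff u c.σ c'.σ c.isSgn c'.isSgn c.rel]
      exact Iff.rfl

lemma faceMap_bijective (hd : 0 < d) (u : E d) : Function.Bijective (faceMap u) := by
  constructor
  · intro a b hab
    exact le_antisymm ((faceMap_le_iff u a b).mp (le_of_eq hab))
      ((faceMap_le_iff u b a).mp (le_of_eq hab.symm))
  · rintro ⟨F, hF⟩
    by_cases hne : F.Nonempty
    · obtain ⟨σ, hσ, hrel, heq⟩ := exposed_eq_fface hd u F hF hne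
      exact ⟨((⟨σ, hσ, hrel⟩ : CF u) : WithBot (CF u)), Subtype.ext heq.symm⟩
    · refine ⟨⊥, Subtype.ext ?_⟩
      rw [Set.not_nonempty_iff_eq_empty] at hne
      show (∅ : Set (E d)) = F
      exact hne.symm

def faceIso (hd : 0 < d) (u : E d) :
    WithBot (CF u) ≃o {F : Set (E d) // IsExposed ℝ (slice u) F} where
  toEquiv := Equiv.ofBijective (faceMap u) (faceMap_bijective hd u)
  map_rel_iff' := faceMap_le_iff u _ _

lemma exposed_preimage (T : E d ≃L[ℝ] E d) {A F : Set (E d)} (h : IsExposed ℝ A F) :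
    IsExposed ℝ (T ⁻¹' A) (T ⁻¹' F) := by
  intro hne
  obtain ⟨x, hx⟩ := hne
  obtain ⟨l, hl⟩ := h ⟨T x, hx⟩
  refine ⟨l.comp (T : E d →L[ℝ] E d), ?_⟩
  ext p
  rw [Set.mem_preimage, hl]
  simp only [Set.mem_setOf_eq, ContinuousLinearMap.comp_apply,
    ContinuousLinearEquiv.coe_coe, Set.mem_preimage]
  constructor
  · rintro ⟨h1, h2⟩
    exact ⟨h1, fun q hq => h2 (T q) hq⟩
  · rintro ⟨h1, h2⟩
    refine ⟨h1, fun q hq => ?_⟩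
    have := h2 (T.symm q) (by simpa using hq)
    simpa using this

def facesIso (T : E d ≃L[ℝ] E d) (A : Set (E d)) :
    {F : Set (E d) // IsExposed ℝ A F} ≃o {F : Set (E d) // IsExposed ℝ (T ⁻¹' A) F} where
  toFun F := ⟨T ⁻¹' F.1, exposed_preimage T F.2⟩
  invFun G := ⟨T.symm ⁻¹' G.1, by
    have h := exposed_preimage T.symm (A := T ⁻¹' A) G.2
    rwa [show (T.symm : E d → E d) ⁻¹' ((T : E d → E d) ⁻¹' A) = A by
      ext x; simp] at h⟩
  left_inv F := Subtype.ext (by ext x; simp)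
  right_inv G := Subtype.ext (by ext x; simp)
  map_rel_iff' := by
    intro F G
    show (T : E d → E d) ⁻¹' F.1 ⊆ (T : E d → E d) ⁻¹' G.1 ↔ F.1 ⊆ G.1
    refine Set.preimage_subset_preimage_iff ?_
    rw [T.surjective.range_eq]
    exact Set.subset_univ _

end CubeSliceAux

namespace SignedPerm

variable {d : ℕ}

lemma sign_sq (π : SignedPerm d) (i : Fin d) : π.sign i * π.sign i = 1 := by
  rcases π.sign_unit i with h | h <;> rw [h] <;> norm_num

lemma abs_sign (π : SignedPerm d) (i : Fin d) : |π.sign i| = 1 := by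
  rcases π.sign_unit i with h | h <;> rw [h] <;> norm_num

def linEquiv (π : SignedPerm d) : EuclideanSpace ℝ (Fin d) ≃ₗ[ℝ] EuclideanSpace ℝ (Fin d) where
  toFun := π.act
  invFun v := WithLp.toLp 2 (fun i => π.sign (π.perm.symm i) * v (π.perm.symm i))
  map_add' x y := by
    ext i
    show π.sign i * (x + y) (π.perm i) = π.act x i + π.act y i
    have : (x + y) (π.perm i) = x (π.perm i) + y (π.perm i) := by simp
    rw [this]
    show _ = π.sign i * x (π.perm i) + π.sign i * y (π.perm i)
    ring
  map_smul' a x := by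
    ext i
    show π.sign i * (a • x) (π.perm i) = (a • (π.act x)) i
    have h1 : (a • x) (π.perm i) = a * x (π.perm i) := by simp
    have h2 : (a • (π.act x)) i = a * (π.sign i * x (π.perm i)) := by
      have : (a • (π.act x)) i = a * (π.act x) i := by simp
      rw [this]; rfl
    rw [h1, h2]
    ring
  left_inv x := by
    ext i
    show π.sign (π.perm.symm i) * (π.act x) (π.perm.symm i) = x i
    show π.sign (π.perm.symm i) * (π.sign (π.perm.symm i) * x (π.perm (π.perm.symm i))) = x i
    rw [← mul_assoc, π.sign_sq, one_mul, Equiv.apply_symm_apply]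
  right_inv v := by
    ext i
    show π.sign i * (π.sign (π.perm.symm (π.perm i)) * v (π.perm.symm (π.perm i))) = v i
    rw [Equiv.symm_apply_apply, ← mul_assoc, π.sign_sq, one_mul]

lemma act_inner (π : SignedPerm d) (u x : EuclideanSpace ℝ (Fin d)) :
    ⟪π.act u, π.act x⟫ = ⟪u, x⟫ := by
  rw [CubeSliceAux.inner_eq, CubeSliceAux.inner_eq]
  calc ∑ i, (π.act u) i * (π.act x) i
      = ∑ i, u (π.perm i) * x (π.perm i) := by
        refine Finset.sum_congr rfl fun i _ => ?_
        show (π.sign i * u (π.perm i)) * (π.sign i * x (π.perm i)) = _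
        rw [show (π.sign i * u (π.perm i)) * (π.sign i * x (π.perm i))
            = (π.sign i * π.sign i) * (u (π.perm i) * x (π.perm i)) by ring,
          π.sign_sq, one_mul]
    _ = ∑ i, u i * x i := Equiv.sum_comp π.perm (fun j => u j * x j)

lemma act_mem_cube_iff (π : SignedPerm d) (x : EuclideanSpace ℝ (Fin d)) :
    π.act x ∈ cube d ↔ x ∈ cube d := by
  constructor
  · intro hx j
    have := hx (π.perm.symm j)
    show |x j| ≤ 1
    have heq : |π.act x (π.perm.symm j)| = |x j| := by
      show |π.sign (π.perm.symm j) * x (π.perm (π.perm.symm j))| = |x j|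
      rw [abs_mul, π.abs_sign, one_mul, Equiv.apply_symm_apply]
    rwa [heq] at this
  · intro hx i
    show |π.sign i * x (π.perm i)| ≤ 1
    rw [abs_mul, π.abs_sign, one_mul]
    exact hx (π.perm i)

lemma act_mem_slice_iff (π : SignedPerm d) (u x : EuclideanSpace ℝ (Fin d)) :
    π.act x ∈ CubeSliceAux.slice (π.act u) ↔ x ∈ CubeSliceAux.slice u := by
  unfold CubeSliceAux.slice
  rw [Set.mem_inter_iff, Set.mem_inter_iff, act_mem_cube_iff]
  simp only [Set.mem_setOf_eq, act_inner]

end SignedPerm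

open CubeSliceAux

/-- If there is a signed permutation `π ∈ B_d` such that `u₁` and `π(u₂)` induce the same
partition of the vertices of the cube `C_d` (into those with nonnegative and those with
negative scalar product), then the slices `C_d ∩ u₁^⊥` and `C_d ∩ u₂^⊥` are combinatorially
equivalent. -/
theorem same_vertex_partition_combEquiv (d : ℕ) (u₁ u₂ : EuclideanSpace ℝ (Fin d))
    (hu₁ : u₁ ≠ 0) (hu₂ : u₂ ≠ 0)
    (h : ∃ π : SignedPerm d, ∀ v ∈ cubeVertices d, (0 ≤ ⟪u₁, v⟫ ↔ 0 ≤ ⟪π.act u₂, v⟫)) :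
    CombEquiv (cube d ∩ {x | ⟪u₁, x⟫ = 0}) (cube d ∩ {x | ⟪u₂, x⟫ = 0}) := by
  classical
  obtain ⟨π, hπ⟩ := h
  rcases Nat.eq_zero_or_pos d with hd0 | hd
  · exfalso
    apply hu₁
    subst hd0
    haveI : Subsingleton (EuclideanSpace ℝ (Fin 0)) :=
      ⟨fun a b => PiLp.ext fun i => i.elim0⟩
    exact Subsingleton.elim u₁ 0
  set w : EuclideanSpace ℝ (Fin d) := π.act u₂ with hw
  have hneg_vtx : ∀ v ∈ cubeVertices d, -v ∈ cubeVertices d := by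
    intro v hv i
    have hvi := hv i
    have hni : (-v) i = -(v i) := by simp
    rw [hni]
    rcases hvi with h1 | h1 <;> rw [h1]
    · right; norm_num
    · left; norm_num
  have hpos : ∀ v ∈ cubeVertices d, (0 < ⟪u₁, v⟫ ↔ 0 < ⟪w, v⟫) := by
    intro v hv
    have h2 := hπ (-v) (hneg_vtx v hv)
    rw [inner_neg_right, inner_neg_right] at h2
    have hp1 : ∀ a : ℝ, 0 < a ↔ ¬ (0 ≤ -a) := by
      intro a
      constructor
      · intro h1 hc; linarith
      · intro h1; by_contra hc; push_neg at hc; exact h1 (by linarith)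
    rw [hp1, hp1]
    exact not_congr h2
  have hneg : ∀ v ∈ cubeVertices d, (⟪u₁, v⟫ < 0 ↔ ⟪w, v⟫ < 0) := by
    intro v hv
    have h1 := hπ v hv
    rw [← not_le, ← not_le]
    exact not_congr h1
  have hzero : ∀ v ∈ cubeVertices d, (⟪u₁, v⟫ = 0 ↔ ⟪w, v⟫ = 0) := by
    intro v hv
    have h1 := hπ v hv
    have h2 := hπ (-v) (hneg_vtx v hv)
    rw [inner_neg_right, inner_neg_right] at h2
    have hz1 : ∀ a : ℝ, a = 0 ↔ (0 ≤ a ∧ 0 ≤ -a) := by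
      intro a
      constructor
      · intro h1'; constructor <;> simp [h1']
      · rintro ⟨h1', h2'⟩; linarith
    rw [hz1, hz1]
    exact and_congr h1 h2
  have hvtx : ∀ σ : Fin d → ℝ, vtxCond u₁ σ ↔ vtxCond w σ := by
    intro σ
    have hmem : ∀ v : EuclideanSpace ℝ (Fin d), VtxOf σ v → v ∈ cubeVertices d :=
      fun v hv => hv.2
    unfold vtxCond
    constructor
    · rintro (⟨⟨v, hv, hvp⟩, ⟨v', hv', hvn⟩⟩ | hall)
      · exact Or.inl ⟨⟨v, hv, (hpos v (hmem v hv)).mp hvp⟩,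
          ⟨v', hv', (hneg v' (hmem v' hv')).mp hvn⟩⟩
      · exact Or.inr fun v hv => (hzero v (hmem v hv)).mp (hall v hv)
    · rintro (⟨⟨v, hv, hvp⟩, ⟨v', hv', hvn⟩⟩ | hall)
      · exact Or.inl ⟨⟨v, hv, (hpos v (hmem v hv)).mpr hvp⟩,
          ⟨v', hv', (hneg v' (hmem v' hv')).mpr hvn⟩⟩
      · exact Or.inr fun v hv => (hzero v (hmem v hv)).mpr (hall v hv)
  have hrel : ∀ σ : Fin d → ℝ, IsSgn σ → (relCond u₁ σ ↔ relCond w σ) := by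
    intro σ hσ
    rw [relCond_iff_vtxCond u₁ σ hσ, relCond_iff_vtxCond w σ hσ]
    exact hvtx σ
  let eCF : CF u₁ ≃o CF w :=
    { toFun := fun c => ⟨c.σ, c.isSgn, (hrel c.σ c.isSgn).mp c.rel⟩
      invFun := fun c => ⟨c.σ, c.isSgn, (hrel c.σ c.isSgn).mpr c.rel⟩
      left_inv := fun c => rfl
      right_inv := fun c => rfl
      map_rel_iff' := Iff.rfl }
  let T : EuclideanSpace ℝ (Fin d) ≃L[ℝ] EuclideanSpace ℝ (Fin d) :=
    π.linEquiv.toContinuousLinearEquiv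
  have hpre : (T : EuclideanSpace ℝ (Fin d) → EuclideanSpace ℝ (Fin d)) ⁻¹' (slice w)
      = slice u₂ := by
    ext x
    rw [Set.mem_preimage]
    exact π.act_mem_slice_iff u₂ x
  have i4 := facesIso T (slice w)
  rw [hpre] at i4
  exact ⟨((faceIso hd u₁).symm.trans (OrderIso.withBotCongr eCF)).trans
    ((faceIso hd w).trans i4)⟩
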